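/- arXiv:1610.08290 — 3 statements merged into one kernel-verified Lean document; each statement's English description precedes it below -/
import Mathlib

section
/- Let n and N be positive integers, let γ > 0 be a real number, let h_1, …, h_N ∈ ℂⁿ, let d_1, …, d_N be real numbers, and let γ_1, …, γ_N be real numbers with γ_l < 0 for every l. Define the n×n Hermitian matrix A = γ·I − Σ_{i=1}^N d_i · h_i h_iᴴ and, for each l ∈ {1,…,N}, Γ_l = A + γ_l · h_l h_lᴴ. If Γ_l is positive semidefinite for every l, then A is positive definite. -/
open Matrix
open scoped ComplexOrder

lemma quad_vecMulVec {n : ℕ} (u x : Fin n → ℂ) :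
    star x ⬝ᵥ (vecMulVec u (star u)) *ᵥ x
      = (Complex.normSq (star u ⬝ᵥ x) : ℂ) := by
  have h1 : (vecMulVec u (star u)) *ᵥ x = (star u ⬝ᵥ x) • u := by
    ext i
    simp [mulVec, dotProduct, vecMulVec_apply, Finset.mul_sum, mul_comm, mul_left_comm]
  rw [h1, dotProduct_smul]
  have h2 : star x ⬝ᵥ u = star (star u ⬝ᵥ x) := by
    simp [dotProduct, Finset.sum_comm, mul_comm, star_sum]
  rw [h2, Complex.normSq_eq_conj_mul_self]
  simp [smul_eq_mul, Complex.star_def, mul_comm]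

lemma herm_vmv {n : ℕ} (u : Fin n → ℂ) : (vecMulVec u (star u)).IsHermitian := by
  ext i j
  simp [conjTranspose_apply, vecMulVec_apply, mul_comm]

lemma sum_mulVec' {n N : ℕ} (M : Fin N → Matrix (Fin n) (Fin n) ℂ) (x : Fin n → ℂ) :
    (∑ i, M i) *ᵥ x = ∑ i, M i *ᵥ x := by
  ext j
  simp [mulVec, dotProduct, Matrix.sum_apply, Finset.sum_mul]
  exact Finset.sum_comm

lemma dotProduct_sum' {n N : ℕ} (v : Fin n → ℂ) (f : Fin N → Fin n → ℂ) :
    v ⬝ᵥ (∑ i, f i) = ∑ i, v ⬝ᵥ f i := by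
  simp [dotProduct, Finset.sum_apply, Finset.mul_sum]
  exact Finset.sum_comm


/-- With `γ > 0`, channel vectors `h₁,…,h_N ∈ ℂⁿ`, real coefficients
`d₁,…,d_N` and negative reals `γ₁,…,γ_N`, set
`A = γ·I − Σᵢ dᵢ · hᵢ hᵢᴴ` and `Γₗ = A + γₗ · hₗ hₗᴴ`.
If every `Γₗ` is positive semidefinite, then `A` is positive definite. -/
theorem stmt_0 (n N : ℕ) (hn : 0 < n) (hN : 0 < N) (γ : ℝ) (hγ : 0 < γ)
    (h : Fin N → (Fin n → ℂ)) (d : Fin N → ℝ) (γl : Fin N → ℝ) (hγl : ∀ l, γl l < 0)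
    (A : Matrix (Fin n) (Fin n) ℂ)
    (hA : A = (γ : ℂ) • (1 : Matrix (Fin n) (Fin n) ℂ) -
        ∑ i, (d i : ℂ) • vecMulVec (h i) (star (h i)))
    (hΓ : ∀ l, (A + (γl l : ℂ) • vecMulVec (h l) (star (h l))).PosSemidef) :
    A.PosDef := by
  rw [posDef_iff_dotProduct_mulVec]
  constructor
  · -- Hermitian
    unfold Matrix.IsHermitian
    rw [hA, conjTranspose_sub, conjTranspose_smul, conjTranspose_sum]
    congr 1
    · simp [Complex.star_def, Complex.conj_ofReal]
    · refine Finset.sum_congr rfl fun i _ => ?_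
      rw [conjTranspose_smul, (herm_vmv (h i)).eq]
      simp [Complex.star_def, Complex.conj_ofReal]
  · intro x hx
    set q : ℂ := star x ⬝ᵥ A *ᵥ x with hqdef
    set c : Fin N → ℝ := fun l => Complex.normSq (star (h l) ⬝ᵥ x) with hc
    have hql : ∀ l, star x ⬝ᵥ (A + (γl l : ℂ) • vecMulVec (h l) (star (h l))) *ᵥ x
        = q + (γl l : ℂ) * (c l : ℂ) := by
      intro l
      rw [add_mulVec, dotProduct_add, smul_mulVec, dotProduct_smul, quad_vecMulVec]
      simp [smul_eq_mul, hc, hqdef]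
    have hPSD : ∀ l, (0:ℝ) ≤ (q + (γl l : ℂ) * (c l : ℂ)).re ∧
        (q + (γl l : ℂ) * (c l : ℂ)).im = 0 := by
      intro l
      have := (hΓ l).dotProduct_mulVec_nonneg x
      rw [hql l] at this
      rw [Complex.le_def] at this
      exact ⟨by simpa using this.1, by simpa using this.2.symm⟩
    have l0 : Fin N := ⟨0, hN⟩
    have him : q.im = 0 := by
      have := (hPSD l0).2
      simpa using this
    -- value of q
    have hqval : q = (γ : ℂ) * (star x ⬝ᵥ x) - ∑ i, (d i : ℂ) * (c i : ℂ) := by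
      rw [hqdef, hA, sub_mulVec, dotProduct_sub, smul_mulVec, one_mulVec,
        dotProduct_smul]
      rw [sum_mulVec', dotProduct_sum']
      congr 1
      refine Finset.sum_congr rfl fun i _ => ?_
      rw [smul_mulVec, dotProduct_smul, quad_vecMulVec]
      simp [smul_eq_mul, hc]
    have hs : star x ⬝ᵥ x = ((∑ i, Complex.normSq (x i) : ℝ) : ℂ) := by
      push_cast
      simp [dotProduct, Complex.normSq_eq_conj_mul_self, Complex.star_def, mul_comm]
    have hspos : (0:ℝ) < ∑ i, Complex.normSq (x i) := by
      obtain ⟨i, hi⟩ := Function.ne_iff.mp hx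
      exact Finset.sum_pos' (fun j _ => Complex.normSq_nonneg _)
        ⟨i, Finset.mem_univ i, by simpa [Complex.normSq_pos] using hi⟩
    have hre : 0 < q.re := by
      by_cases hcase : ∀ l, c l = 0
      · have : q = (γ : ℂ) * ((∑ i, Complex.normSq (x i) : ℝ) : ℂ) := by
          rw [hqval, hs]
          simp [hcase]
        rw [this]
        push_cast
        simpa using mul_pos hγ hspos
      · push_neg at hcase
        obtain ⟨l, hl⟩ := hcase
        have hclpos : 0 < c l := lt_of_le_of_ne (Complex.normSq_nonneg _) (Ne.symm hl)
        have h1 := (hPSD l).1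
        have : (q + (γl l : ℂ) * (c l : ℂ)).re = q.re + γl l * c l := by
          simp
        rw [this] at h1
        nlinarith [mul_neg_of_neg_of_pos (hγl l) hclpos]
    rw [Complex.lt_def]
    exact ⟨by simpa using hre, by simpa using him.symm⟩
end

section
/- Let n and N be positive integers, let γ > 0 be a real number, let h_1, …, h_N ∈ ℂⁿ, let d_1, …, d_N be real numbers, and let γ_1, …, γ_N be real numbers with γ_l < 0 for every l. Define A = γ·I − Σ_{i=1}^N d_i · h_i h_iᴴ and, for each l ∈ {1,…,N}, Γ_l = A + γ_l · h_l h_lᴴ, and suppose Γ_l is positive semidefinite for every l. If for each l there is a nonzero positive semidefinite n×n matrix X_l satisfying the complementary slackness condition Γ_l X_l = 0, then rank X_l = 1 for every l. -/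
open Matrix
open scoped ComplexOrder

/-- With `γ > 0`, `h₁,…,h_N ∈ ℂⁿ`, real `d₁,…,d_N`, negative reals
`γ₁,…,γ_N`, set `A = γ·I − Σᵢ dᵢ · hᵢ hᵢᴴ` and `Γₗ = A + γₗ · hₗ hₗᴴ`, each `Γₗ`
positive semidefinite. If for each `l` there is a nonzero positive semidefinite `Xₗ`
with `Γₗ Xₗ = 0`, then each `Xₗ` has rank one. -/
theorem stmt_1 (n N : ℕ) (hn : 0 < n) (hN : 0 < N) (γ : ℝ) (hγ : 0 < γ)
    (h : Fin N → (Fin n → ℂ)) (d : Fin N → ℝ) (γl : Fin N → ℝ) (hγl : ∀ l, γl l < 0)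
    (A : Matrix (Fin n) (Fin n) ℂ)
    (hA : A = (γ : ℂ) • (1 : Matrix (Fin n) (Fin n) ℂ) -
        ∑ i, (d i : ℂ) • vecMulVec (h i) (star (h i)))
    (hΓ : ∀ l, (A + (γl l : ℂ) • vecMulVec (h l) (star (h l))).PosSemidef)
    (X : Fin N → Matrix (Fin n) (Fin n) ℂ)
    (hXpsd : ∀ l, (X l).PosSemidef) (hXne : ∀ l, X l ≠ 0)
    (hslack : ∀ l, (A + (γl l : ℂ) • vecMulVec (h l) (star (h l))) * X l = 0) :
    ∀ l, (X l).rank = 1 := by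
  classical
  -- `vecMulVec u (star u) *ᵥ x = (star u ⬝ᵥ x) • u`
  have hvmv : ∀ (u x : Fin n → ℂ), (vecMulVec u (star u)) *ᵥ x = (star u ⬝ᵥ x) • u := by
    intro u x; funext i
    simp [mulVec, vecMulVec_apply, dotProduct, Finset.mul_sum, mul_comm, mul_left_comm,
      mul_assoc]
  have hsd : ∀ (u x : Fin n → ℂ), star x ⬝ᵥ u = star (star u ⬝ᵥ x) := by
    intro u x; simp [dotProduct, mul_comm]
  -- formula for `A *ᵥ x`
  have hAx : ∀ x, A *ᵥ x = (γ : ℂ) • x - ∑ i, (d i : ℂ) • ((star (h i) ⬝ᵥ x) • h i) := by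
    intro x
    have hsum : (∑ i, (d i : ℂ) • vecMulVec (h i) (star (h i))) *ᵥ x
        = ∑ i, (((d i : ℂ) • vecMulVec (h i) (star (h i))) *ᵥ x) := by
      funext k
      simp only [mulVec, dotProduct, Finset.sum_apply, Matrix.sum_apply, Finset.sum_mul]
      rw [Finset.sum_comm]
    rw [hA, sub_mulVec, smul_mulVec, one_mulVec, hsum]
    congr 1
    refine Finset.sum_congr rfl fun i _ => ?_
    rw [smul_mulVec, hvmv]
  -- a sign lemma
  have hzero : ∀ (i : Fin N) (r : ℂ), 0 ≤ r → 0 ≤ (γl i : ℂ) * r → r = 0 := by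
    intro i r hr h2
    by_contra hne
    have hrpos : 0 < r := lt_of_le_of_ne hr (Ne.symm hne)
    have : (γl i : ℂ) * r < 0 := mul_neg_of_neg_of_pos (by exact_mod_cast hγl i) hrpos
    exact absurd h2 this.not_ge
  -- A is injective
  have hAinj : ∀ x, A *ᵥ x = 0 → x = 0 := by
    intro x hx
    have hc : ∀ i, star (h i) ⬝ᵥ x = 0 := by
      intro i
      have h1 := (hΓ i).dotProduct_mulVec_nonneg x
      rw [add_mulVec, smul_mulVec, hvmv, hx, zero_add, dotProduct_smul,
        dotProduct_smul] at h1
      set c : ℂ := star (h i) ⬝ᵥ x with hc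
      rw [hsd (h i) x, ← hc] at h1
      have h2 : (0 : ℂ) ≤ (γl i : ℂ) * (c * star c) := by
        simpa [smul_eq_mul, mul_assoc] using h1
      have h3 : c * star c = 0 := hzero i _ (mul_star_self_nonneg c) h2
      rcases mul_eq_zero.mp h3 with h4 | h4
      · exact h4
      · simpa using h4
    have hgx : (γ : ℂ) • x = 0 := by
      have := hAx x
      rw [hx] at this
      simp [hc] at this
      exact this.symm
    have hγ0 : (γ : ℂ) ≠ 0 := by
      simp only [ne_eq, Complex.ofReal_eq_zero]; exact hγ.ne'
    exact (smul_eq_zero.mp hgx).resolve_left hγ0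
  intro l
  set Γ : Matrix (Fin n) (Fin n) ℂ := A + (γl l : ℂ) • vecMulVec (h l) (star (h l)) with hΓdef
  -- the kernel of Γ injects into ℂ
  have hker : ∀ x, Γ *ᵥ x = 0 → star (h l) ⬝ᵥ x = 0 → x = 0 := by
    intro x h1 h2
    rw [hΓdef, add_mulVec, smul_mulVec, hvmv, h2, zero_smul, smul_zero, add_zero] at h1
    exact hAinj x h1
  have hfker : Module.finrank ℂ (LinearMap.ker Γ.mulVecLin) ≤ 1 := by
    let f0 : (Fin n → ℂ) →ₗ[ℂ] ℂ :=
      { toFun := fun x => star (h l) ⬝ᵥ x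
        map_add' := fun a b => dotProduct_add _ _ _
        map_smul' := fun c a => by simpa using dotProduct_smul c (star (h l)) a }
    let f : LinearMap.ker Γ.mulVecLin →ₗ[ℂ] ℂ :=
      f0.comp (LinearMap.ker Γ.mulVecLin).subtype
    have hfi : Function.Injective f := by
      rw [← LinearMap.ker_eq_bot]
      refine (Submodule.eq_bot_iff _).mpr fun x hx => ?_
      have h1 : Γ *ᵥ (x : Fin n → ℂ) = 0 := by
        have h1' := LinearMap.mem_ker.mp x.2
        rwa [mulVecLin_apply] at h1'
      have h2 : star (h l) ⬝ᵥ (x : Fin n → ℂ) = 0 := hx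
      exact Subtype.ext (hker _ h1 h2)
    simpa using LinearMap.finrank_le_finrank_of_injective hfi
  -- range of X l is inside ker of Γ
  have hsub : LinearMap.range (X l).mulVecLin ≤ LinearMap.ker Γ.mulVecLin := by
    rintro y ⟨x, rfl⟩
    simp only [LinearMap.mem_ker, mulVecLin_apply]
    rw [mulVec_mulVec, hΓdef, hslack l, zero_mulVec]
  have hle : (X l).rank ≤ 1 := by
    calc (X l).rank = Module.finrank ℂ (LinearMap.range (X l).mulVecLin) := rfl
      _ ≤ Module.finrank ℂ (LinearMap.ker Γ.mulVecLin) := Submodule.finrank_mono hsub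
      _ ≤ 1 := hfker
  have hpos : (X l).rank ≠ 0 := by
    intro h0
    apply hXne l
    have hbot : LinearMap.range (X l).mulVecLin = ⊥ := Submodule.finrank_eq_zero.mp h0
    have hz : ∀ x, (X l) *ᵥ x = 0 := by
      intro x
      have : (X l).mulVecLin x ∈ (⊥ : Submodule ℂ (Fin n → ℂ)) := by
        rw [← hbot]; exact LinearMap.mem_range_self _ _
      simpa [mulVecLin_apply] using this
    ext i j
    have := congrFun (hz (Pi.single j 1)) i
    simpa [mulVec_single] using this
  omega
end

section
/- Let n be a positive integer, γ > 0 a real number, b a real number, and h ∈ ℂⁿ. Define the n×n matrix Γ = γ·I − b · h hᴴ. Then rank Γ ≥ n − 1; moreover, if X is any nonzero n×n complex matrix with Γ X = 0, then rank X = 1. -/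
open Matrix

lemma ker_le_span (n : ℕ) (γ b : ℝ) (hγ : 0 < γ) (h : Fin n → ℂ) :
    LinearMap.ker (((γ : ℂ) • (1 : Matrix (Fin n) (Fin n) ℂ) -
      (b : ℂ) • vecMulVec h (star h)).mulVecLin) ≤ Submodule.span ℂ {h} := by
  intro x hx
  simp only [LinearMap.mem_ker, mulVecLin_apply, sub_mulVec, smul_mulVec,
    one_mulVec] at hx
  have hx' : (γ : ℂ) • x = (b : ℂ) • (vecMulVec h (star h)).mulVec x := by
    rwa [sub_eq_zero] at hx
  have hγ' : (γ : ℂ) ≠ 0 := by exact_mod_cast hγ.ne'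
  have hm : (vecMulVec h (star h)).mulVec x = (star h ⬝ᵥ x) • h := by
    ext i
    simp [vecMulVec, mulVec, dotProduct, Finset.mul_sum, mul_comm, mul_assoc, mul_left_comm]
  rw [hm] at hx'
  have hx2 := congrArg (fun v => (γ : ℂ)⁻¹ • v) hx'
  simp only [smul_smul, inv_mul_cancel₀ hγ', one_smul] at hx2
  rw [hx2]
  exact Submodule.smul_mem _ _ (Submodule.mem_span_singleton_self h)

lemma ker_finrank_le (n : ℕ) (γ b : ℝ) (hγ : 0 < γ) (h : Fin n → ℂ) :
    Module.finrank ℂ (LinearMap.ker (((γ : ℂ) • (1 : Matrix (Fin n) (Fin n) ℂ) -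
      (b : ℂ) • vecMulVec h (star h)).mulVecLin)) ≤ 1 := by
  refine le_trans (Submodule.finrank_mono (ker_le_span n γ b hγ h)) ?_
  by_cases hh : h = 0
  · subst hh
    rw [Submodule.span_zero_singleton]
    simp
  · rw [finrank_span_singleton hh]

/-- For `γ > 0`, `b ∈ ℝ` and `h ∈ ℂⁿ`, the matrix `Γ = γ·I − b·h hᴴ`
has rank at least `n − 1`, and any nonzero `X` with `Γ X = 0` has rank one. -/
theorem stmt_2 (n : ℕ) (hn : 0 < n) (γ b : ℝ) (hγ : 0 < γ) (h : Fin n → ℂ) :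
    (n : ℤ) - 1 ≤ (((γ : ℂ) • (1 : Matrix (Fin n) (Fin n) ℂ) -
        (b : ℂ) • vecMulVec h (star h)).rank : ℤ) ∧
    ∀ X : Matrix (Fin n) (Fin n) ℂ, X ≠ 0 →
      ((γ : ℂ) • (1 : Matrix (Fin n) (Fin n) ℂ) - (b : ℂ) • vecMulVec h (star h)) * X = 0 →
      X.rank = 1 := by
  set Γ : Matrix (Fin n) (Fin n) ℂ :=
    (γ : ℂ) • (1 : Matrix (Fin n) (Fin n) ℂ) - (b : ℂ) • vecMulVec h (star h) with hΓ
  have hker : Module.finrank ℂ (LinearMap.ker Γ.mulVecLin) ≤ 1 :=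
    ker_finrank_le n γ b hγ h
  have hrn : Γ.rank + Module.finrank ℂ (LinearMap.ker Γ.mulVecLin) = n := by
    rw [Matrix.rank]
    rw [LinearMap.finrank_range_add_finrank_ker Γ.mulVecLin]
    simp
  constructor
  · omega
  · intro X hX hΓX
    have hle : X.rank ≤ 1 := by
      have hrange : LinearMap.range X.mulVecLin ≤ LinearMap.ker Γ.mulVecLin := by
        rintro - ⟨v, rfl⟩
        simp only [LinearMap.mem_ker, mulVecLin_apply, mulVec_mulVec, hΓX, zero_mulVec]
      exact le_trans (Submodule.finrank_mono hrange) hker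
    have hge : 1 ≤ X.rank := by
      by_contra hc
      push_neg at hc
      interval_cases hr : X.rank
      apply hX
      have hbot : LinearMap.range X.mulVecLin = ⊥ :=
        Submodule.finrank_eq_zero.mp hr
      ext i j
      have : X.mulVec (Pi.single j 1) = 0 := by
        have : X.mulVec (Pi.single j 1) ∈ LinearMap.range X.mulVecLin :=
          ⟨Pi.single j 1, rfl⟩
        simpa [hbot] using this
      have := congrFun this i
      simpa [mulVec_single] using this
    omega
end
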